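/- Let N be a positive integer, let c = (c_1, …, c_N) ∈ ℝ^N and W ∈ ℝ^P be shared parameters, and for models γ ∈ {α, β} with α ≠ β let f_γ(x; c, W) = N^{-1/2} Σ_{i=1}^N c_i u_{γ i} φ(v_{γ i} h_i(x; W)), where each h_i(·; W): ℝ^d → ℝ is differentiable in W, φ: ℝ → ℝ is differentiable, (v_{γ i}) are random modulations, and the two families (u_{α i})_i and (u_{β i})_i are integrable, centered (E[u_{γ i}] = 0), mutually independent, and independent of all other random variables. Assume all appearing products are integrable. Then for all inputs x, x', the expectation over initialization of the shared-parameter NTK vanishes: E[ ∇_{(c,W)} f_α(x) · ∇_{(c,W)} f_β(x') ] = 0, where ∇_{(c,W)} denotes the gradient with respect to all shared parameters (c_1,…,c_N, W). -/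

import Mathlib

/-!
Both gradients are taken with respect to the shared parameters `θ = (c, W)`, and the modulation
`u_{γ i}` enters `f_γ` only as a factor of the `i`-th neuron. Hence the NTK expands into terms
`u_{α i} · R_{i i'}` where `R_{i i'}` is a function of `u_β`, `v_α`, `v_β` alone; as `u_α` is
centered and independent of these, every term has mean zero.
-/

open MeasureTheory ProbabilityTheory
open scoped RealInnerProductSpace

namespace EuclideanSpace

variable {ι κ : Type*} [Fintype ι] [Fintype κ]

noncomputable def sumInr : EuclideanSpace ℝ (ι ⊕ κ) →L[ℝ] EuclideanSpace ℝ κ :=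
  LinearMap.toContinuousLinearMap
    { toFun := fun θ => WithLp.toLp 2 (fun q => θ (Sum.inr q))
      map_add' := fun _ _ => rfl
      map_smul' := fun _ _ => rfl }

@[simp] lemma sumInr_apply (θ : EuclideanSpace ℝ (ι ⊕ κ)) (q : κ) :
    sumInr θ q = θ (Sum.inr q) :=
  rfl

lemma inner_eq_sum_inl_add_inner_sumInr (u v : EuclideanSpace ℝ (ι ⊕ κ)) :
    ⟪u, v⟫ = ∑ j, u (Sum.inl j) * v (Sum.inl j) + ⟪sumInr u, sumInr v⟫ := by
  simp only [PiLp.inner_apply, Fintype.sum_sum_type, sumInr_apply, RCLike.inner_apply,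
    conj_trivial, mul_comm]

lemma gradient_apply [DecidableEq ι] (f : EuclideanSpace ℝ ι → ℝ) (x : EuclideanSpace ℝ ι)
    (k : ι) : gradient f x k = fderiv ℝ f x (single k 1) := by
  rw [← inner_gradient_left, inner_single_right]
  simp

lemma hasFDerivAt_sum_inl_mul {g : ι → EuclideanSpace ℝ κ → ℝ} {θ₀ : EuclideanSpace ℝ (ι ⊕ κ)}
    (hg : ∀ i, DifferentiableAt ℝ (g i) (sumInr θ₀)) :
    HasFDerivAt (fun θ => ∑ i, θ (Sum.inl i) * g i (sumInr θ))
      (∑ i, (θ₀ (Sum.inl i) • (fderiv ℝ (g i) (sumInr θ₀)).comp sumInr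
        + g i (sumInr θ₀) • proj (Sum.inl i))) θ₀ :=
  HasFDerivAt.fun_sum fun i _ =>
    (proj (Sum.inl i) : EuclideanSpace ℝ (ι ⊕ κ) →L[ℝ] ℝ).hasFDerivAt.mul
      ((hg i).hasFDerivAt.comp θ₀ sumInr.hasFDerivAt)

lemma gradient_sum_inl_mul_apply_inl {g : ι → EuclideanSpace ℝ κ → ℝ}
    {θ₀ : EuclideanSpace ℝ (ι ⊕ κ)} (hg : ∀ i, DifferentiableAt ℝ (g i) (sumInr θ₀)) (j : ι) :
    gradient (fun θ => ∑ i, θ (Sum.inl i) * g i (sumInr θ)) θ₀ (Sum.inl j)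
      = g j (sumInr θ₀) := by
  classical
  have hsingle : sumInr (single (Sum.inl j : ι ⊕ κ) (1 : ℝ)) = 0 := by ext; simp
  simp [gradient_apply, (hasFDerivAt_sum_inl_mul hg).fderiv, hsingle]

lemma sumInr_gradient_sum_inl_mul {g : ι → EuclideanSpace ℝ κ → ℝ}
    {θ₀ : EuclideanSpace ℝ (ι ⊕ κ)} (hg : ∀ i, DifferentiableAt ℝ (g i) (sumInr θ₀)) :
    sumInr (gradient (fun θ => ∑ i, θ (Sum.inl i) * g i (sumInr θ)) θ₀)
      = ∑ i, θ₀ (Sum.inl i) • gradient (g i) (sumInr θ₀) := by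
  classical
  ext q
  have hsingle : sumInr (single (Sum.inr q : ι ⊕ κ) (1 : ℝ)) = single q 1 := by ext; simp
  simp [gradient_apply, (hasFDerivAt_sum_inl_mul hg).fderiv, hsingle]

lemma inner_gradient_sum_inl_mul {g g' : ι → EuclideanSpace ℝ κ → ℝ}
    {θ₀ : EuclideanSpace ℝ (ι ⊕ κ)} (hg : ∀ i, DifferentiableAt ℝ (g i) (sumInr θ₀))
    (hg' : ∀ i, DifferentiableAt ℝ (g' i) (sumInr θ₀)) :
    ⟪gradient (fun θ => ∑ i, θ (Sum.inl i) * g i (sumInr θ)) θ₀,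
        gradient (fun θ => ∑ i, θ (Sum.inl i) * g' i (sumInr θ)) θ₀⟫
      = ∑ j, g j (sumInr θ₀) * g' j (sumInr θ₀)
        + ∑ i, ∑ i', θ₀ (Sum.inl i) * θ₀ (Sum.inl i')
            * ⟪gradient (g i) (sumInr θ₀), gradient (g' i') (sumInr θ₀)⟫ := by
  rw [inner_eq_sum_inl_add_inner_sumInr, sumInr_gradient_sum_inl_mul hg,
    sumInr_gradient_sum_inl_mul hg', sum_inner]
  simp only [gradient_sum_inl_mul_apply_inl hg, gradient_sum_inl_mul_apply_inl hg', inner_sum,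
    real_inner_smul_left, real_inner_smul_right]
  congr 1
  exact Finset.sum_congr rfl fun i _ => Finset.sum_congr rfl fun i' _ => by ring

end EuclideanSpace

lemma gradient_const_mul_comp_const_mul {E : Type*} [NormedAddCommGroup E]
    [InnerProductSpace ℝ E] [CompleteSpace E] {φ : ℝ → ℝ} {h : E → ℝ} {w : E} (a b : ℝ)
    (hφ : DifferentiableAt ℝ φ (b * h w)) (hh : DifferentiableAt ℝ h w) :
    gradient (fun w => a * φ (b * h w)) w = (a * b * deriv φ (b * h w)) • gradient h w := by
  have hderiv : HasFDerivAt (fun w => a * φ (b * h w))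
      (a • deriv φ (b * h w) • b • fderiv ℝ h w) w :=
    (hφ.hasDerivAt.comp_hasFDerivAt w (hh.hasFDerivAt.const_mul b)).const_mul a
  rw [(hasFDerivAt_iff_hasGradientAt.mp hderiv).gradient, gradient]
  simp [smul_smul, mul_comm, mul_assoc]

section ModulatedNet

open EuclideanSpace

variable {ι κ : Type*} [Fintype ι] [Fintype κ]

/-- The paper's `f_γ(x; c, W)` at `θ = (c, W)`, with `s = N^{-1/2}`, `u = u_γ`, `v = v_γ` and
`h i = h_i(x; ·)`. -/
noncomputable def modulatedNet (s : ℝ) (u v : ι → ℝ) (φ : ℝ → ℝ)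
    (h : ι → EuclideanSpace ℝ κ → ℝ) (θ : EuclideanSpace ℝ (ι ⊕ κ)) : ℝ :=
  s * ∑ i, θ (Sum.inl i) * u i * φ (v i * h i (sumInr θ))

lemma modulatedNet_eq_sum_inl_mul (s : ℝ) (u v : ι → ℝ) (φ : ℝ → ℝ)
    (h : ι → EuclideanSpace ℝ κ → ℝ) :
    modulatedNet s u v φ h
      = fun θ => ∑ i, θ (Sum.inl i) * (fun w => s * u i * φ (v i * h i w)) (sumInr θ) := by
  funext θ
  simp only [modulatedNet, Finset.mul_sum]
  exact Finset.sum_congr rfl fun i _ => by ring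

lemma inner_gradient_modulatedNet {s : ℝ} {u v u' v' : ι → ℝ} {φ : ℝ → ℝ}
    {h h' : ι → EuclideanSpace ℝ κ → ℝ} {θ₀ : EuclideanSpace ℝ (ι ⊕ κ)}
    (hφ : Differentiable ℝ φ) (hh : ∀ i, DifferentiableAt ℝ (h i) (sumInr θ₀))
    (hh' : ∀ i, DifferentiableAt ℝ (h' i) (sumInr θ₀)) :
    ⟪gradient (modulatedNet s u v φ h) θ₀, gradient (modulatedNet s u' v' φ h') θ₀⟫
      = ∑ j, s * s * (u j * u' j * φ (v j * h j (sumInr θ₀)) * φ (v' j * h' j (sumInr θ₀)))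
        + ∑ i, ∑ i', s * s * θ₀ (Sum.inl i) * θ₀ (Sum.inl i')
            * ⟪gradient (h i) (sumInr θ₀), gradient (h' i') (sumInr θ₀)⟫
            * (u i * u' i' * v i * v' i'
              * deriv φ (v i * h i (sumInr θ₀)) * deriv φ (v' i' * h' i' (sumInr θ₀))) := by
  rw [modulatedNet_eq_sum_inl_mul, modulatedNet_eq_sum_inl_mul,
    inner_gradient_sum_inl_mul (g := fun i w => s * u i * φ (v i * h i w))
      (g' := fun i w => s * u' i * φ (v' i * h' i w)) (fun i => by fun_prop)
      (fun i => by fun_prop)]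
  simp only [gradient_const_mul_comp_const_mul _ _ (hφ _) (hh _),
    gradient_const_mul_comp_const_mul _ _ (hφ _) (hh' _), real_inner_smul_left,
    real_inner_smul_right]
  congr 1
  · exact Finset.sum_congr rfl fun j _ => by ring
  · exact Finset.sum_congr rfl fun i _ => Finset.sum_congr rfl fun i' _ => by ring

end ModulatedNet

section Independence

variable {Ω : Type*} {mΩ : MeasurableSpace Ω} {P : Measure Ω}

lemma integral_mul_eq_zero_of_indep {m₁ m₂ : MeasurableSpace Ω} {X Y : Ω → ℝ}
    (hindep : Indep m₁ m₂ P) (hm₁ : m₁ ≤ mΩ) (hm₂ : m₂ ≤ mΩ)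
    (hX : Measurable[m₁] X) (hY : Measurable[m₂] Y) (hX0 : ∫ ω, X ω ∂P = 0) :
    ∫ ω, X ω * Y ω ∂P = 0 := by
  have hXY : IndepFun X Y P :=
    (IndepFun_iff_Indep X Y P).2 (indep_of_indep_of_le_left
      (indep_of_indep_of_le_right hindep hY.comap_le) hX.comap_le)
  rw [hXY.integral_fun_mul_eq_mul_integral (hX.mono hm₁ le_rfl).aestronglyMeasurable
    (hY.mono hm₂ le_rfl).aestronglyMeasurable, hX0, zero_mul]

lemma iIndep.indep_sup_of_fin_three {m₀ m₁ m₂ : MeasurableSpace Ω}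
    (h : iIndep ![m₀, m₁, m₂] P) (h₀ : m₀ ≤ mΩ) (h₁ : m₁ ≤ mΩ) (h₂ : m₂ ≤ mΩ) :
    Indep m₀ (m₁ ⊔ m₂) P := by
  have h_le : ∀ k, ![m₀, m₁, m₂] k ≤ mΩ := by
    intro k
    fin_cases k
    exacts [h₀, h₁, h₂]
  have hdisj : Disjoint ({0} : Set (Fin 3)) {1, 2} := by simp
  simpa [iSup_insert] using indep_iSup_of_disjoint h_le h hdisj

lemma measurable_iSup_comap {ι β : Type*} [MeasurableSpace β] (f : ι → Ω → β) (i : ι) :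
    Measurable[⨆ j, MeasurableSpace.comap (f j) inferInstance] (f i) :=
  Measurable.of_comap_le (le_iSup (fun j => MeasurableSpace.comap (f j) inferInstance) i)

lemma measurable_pi_iSup_comap {ι β : Type*} [MeasurableSpace β] (f : ι → Ω → β) :
    Measurable[⨆ j, MeasurableSpace.comap (f j) inferInstance] (fun ω j => f j ω) :=
  @measurable_pi_lambda _ _ _ (⨆ j, MeasurableSpace.comap (f j) inferInstance) _ _
    (measurable_iSup_comap f)

lemma iSup_comap_le {ι β : Type*} [MeasurableSpace β] {f : ι → Ω → β}
    (hf : ∀ i, Measurable (f i)) : ⨆ i, MeasurableSpace.comap (f i) inferInstance ≤ mΩ :=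
  iSup_le fun i => (hf i).comap_le

lemma integral_mul_eq_zero_of_iIndep_iSup_comap {ι : Type*} {u u' v v' : ι → Ω → ℝ}
    (hu : ∀ i, Measurable (u i)) (hu' : ∀ i, Measurable (u' i))
    (hv : ∀ i, Measurable (v i)) (hv' : ∀ i, Measurable (v' i))
    (hindep : iIndep
      ![⨆ i, MeasurableSpace.comap (u i) inferInstance,
        ⨆ i, MeasurableSpace.comap (u' i) inferInstance,
        (⨆ i, MeasurableSpace.comap (v i) inferInstance) ⊔
        (⨆ i, MeasurableSpace.comap (v' i) inferInstance)] P)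
    {i : ι} (hu0 : ∫ ω, u i ω ∂P = 0)
    {F : (ι → ℝ) × (ι → ℝ) × (ι → ℝ) → ℝ} (hF : Measurable F) :
    ∫ ω, u i ω * F (fun j => u' j ω, fun j => v j ω, fun j => v' j ω) ∂P = 0 := by
  have hrest : Measurable[(⨆ j, MeasurableSpace.comap (u' j) inferInstance) ⊔
      ((⨆ j, MeasurableSpace.comap (v j) inferInstance) ⊔
        (⨆ j, MeasurableSpace.comap (v' j) inferInstance))]
      (fun ω => (fun j => u' j ω, fun j => v j ω, fun j => v' j ω)) :=
    ((measurable_pi_iSup_comap u').mono le_sup_left le_rfl).prodMk <|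
      ((measurable_pi_iSup_comap v).mono (le_sup_left.trans le_sup_right) le_rfl).prodMk
        ((measurable_pi_iSup_comap v').mono (le_sup_right.trans le_sup_right) le_rfl)
  have hrest_le := sup_le (iSup_comap_le hu') (sup_le (iSup_comap_le hv) (iSup_comap_le hv'))
  exact integral_mul_eq_zero_of_indep
    (iIndep.indep_sup_of_fin_three hindep (iSup_comap_le hu) (iSup_comap_le hu')
      (sup_le (iSup_comap_le hv) (iSup_comap_le hv')))
    (iSup_comap_le hu) hrest_le (measurable_iSup_comap u i) (hF.comp hrest) hu0

end Independence

theorem expected_common_NTK_vanishes_between_models_general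
    {Ω : Type*} [MeasurableSpace Ω] (P : Measure Ω)
    (N Pdim d : ℕ)
    -- shared parameters: last-layer weights `c` and remaining weights `W`, bundled as `θ₀`
    (W : EuclideanSpace ℝ (Fin Pdim))
    (θ₀ : EuclideanSpace ℝ ((Fin N) ⊕ (Fin Pdim)))
    (hθ₀r : ∀ p, θ₀ (Sum.inr p) = W p)
    -- previous layers `h_i(x; W)`, differentiable in `W`
    (h : Fin N → EuclideanSpace ℝ (Fin d) → EuclideanSpace ℝ (Fin Pdim) → ℝ)
    (hh : ∀ i x, Differentiable ℝ (h i x))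
    -- differentiable activation
    (φ : ℝ → ℝ) (hφ : Differentiable ℝ φ)
    -- random modulations
    (uα uβ vα vβ : Fin N → Ω → ℝ)
    (huαm : ∀ i, Measurable (uα i)) (huβm : ∀ i, Measurable (uβ i))
    (hvαm : ∀ i, Measurable (vα i)) (hvβm : ∀ i, Measurable (vβ i))
    -- the `u_{α i}` and `u_{β i}` are integrable and centered
    (huα0 : ∀ i, ∫ ω, uα i ω ∂P = 0)
    -- the family `(u_{α i})`, the family `(u_{β i})` and all other random variables form
    -- three mutually independent blocks
    (hindep : iIndep
      ![⨆ i, MeasurableSpace.comap (uα i) inferInstance,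
        ⨆ i, MeasurableSpace.comap (uβ i) inferInstance,
        (⨆ i, MeasurableSpace.comap (vα i) inferInstance) ⊔
        (⨆ i, MeasurableSpace.comap (vβ i) inferInstance)] P)
    -- the model outputs as functions of the shared parameters `θ`
    (fα fβ : EuclideanSpace ℝ (Fin d) → Ω → EuclideanSpace ℝ ((Fin N) ⊕ (Fin Pdim)) → ℝ)
    (hfα : ∀ x ω θ, fα x ω θ
      = (1 / Real.sqrt N) * ∑ i, θ (Sum.inl i) * uα i ω
          * φ (vα i ω * h i x (WithLp.toLp 2 (fun p => θ (Sum.inr p)))))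
    (hfβ : ∀ x ω θ, fβ x ω θ
      = (1 / Real.sqrt N) * ∑ i, θ (Sum.inl i) * uβ i ω
          * φ (vβ i ω * h i x (WithLp.toLp 2 (fun p => θ (Sum.inr p)))))
    -- all appearing products are integrable
    (hint₁ : ∀ (x x' : EuclideanSpace ℝ (Fin d)) (i i' : Fin N),
      Integrable (fun ω =>
        uα i ω * uβ i' ω * φ (vα i ω * h i x W) * φ (vβ i' ω * h i' x' W)) P)
    (hint₂ : ∀ (x x' : EuclideanSpace ℝ (Fin d)) (i i' : Fin N),
      Integrable (fun ω =>
        uα i ω * uβ i' ω * vα i ω * vβ i' ω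
          * deriv φ (vα i ω * h i x W) * deriv φ (vβ i' ω * h i' x' W)) P) :
    ∀ x x' : EuclideanSpace ℝ (Fin d),
      ∫ ω, ⟪gradient (fα x ω) θ₀, gradient (fβ x' ω) θ₀⟫ ∂P = 0 := by
  intro x x'
  have hW : EuclideanSpace.sumInr θ₀ = W := by ext p; exact hθ₀r p
  have hφm : Measurable φ := hφ.continuous.measurable
  have hφ'm : Measurable (deriv φ) := measurable_deriv φ
  have hmean₁ : ∀ j, ∫ ω, uα j ω * uβ j ω * φ (vα j ω * h j x W) * φ (vβ j ω * h j x' W) ∂P = 0 :=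
    fun j => by
      simpa only [mul_assoc] using integral_mul_eq_zero_of_iIndep_iSup_comap huαm huβm hvαm hvβm
        hindep (huα0 j) (F := fun r => r.1 j * φ (r.2.1 j * h j x W) * φ (r.2.2 j * h j x' W))
        (by fun_prop)
  have hmean₂ : ∀ i i', ∫ ω, uα i ω * uβ i' ω * vα i ω * vβ i' ω
      * deriv φ (vα i ω * h i x W) * deriv φ (vβ i' ω * h i' x' W) ∂P = 0 :=
    fun i i' => by
      simpa only [mul_assoc] using integral_mul_eq_zero_of_iIndep_iSup_comap huαm huβm hvαm hvβm
        hindep (huα0 i) (F := fun r => r.1 i' * (r.2.1 i * (r.2.2 i'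
          * (deriv φ (r.2.1 i * h i x W) * deriv φ (r.2.2 i' * h i' x' W))))) (by fun_prop)
  simp_rw [show ∀ ω, fα x ω = modulatedNet _ (uα · ω) (vα · ω) φ (h · x) from
      fun ω => funext (hfα x ω),
    show ∀ ω, fβ x' ω = modulatedNet _ (uβ · ω) (vβ · ω) φ (h · x') from
      fun ω => funext (hfβ x' ω),
    inner_gradient_modulatedNet hφ (fun i => hh i x _) (fun i => hh i x' _), hW]
  rw [integral_add (by fun_prop) (by fun_prop)]
  simp (disch := intros; fun_prop) only [integral_finsetSum, integral_const_mul, hmean₁, hmean₂,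
    mul_zero, Finset.sum_const_zero, add_zero]

/-- **Vanishing expected shared-parameter NTK between distinct models
(Statement 5, Theorem 2 part 2).**
With shared parameters `θ = (c, W) ∈ ℝ^N × ℝ^P` and model outputs
`f_γ(x; θ) = N^{-1/2} ∑ᵢ θ_{c,i} u_{γ i} φ(v_{γ i} h_i(x; θ_W))`, where the last-layer
post-activation modulation families `(u_{α i})` and `(u_{β i})` are integrable, centered,
mutually independent and independent of everything else, the expectation over initialization
of the shared-parameter NTK between the two models vanishes:
`E[⟪∇_θ f_α(x), ∇_θ f_β(x')⟫] = 0`. -/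
theorem expected_common_NTK_vanishes_between_models
    {Ω : Type*} [MeasurableSpace Ω] (P : Measure Ω) [IsProbabilityMeasure P]
    (N Pdim d : ℕ) (hN : 0 < N)
    -- shared parameters: last-layer weights `c` and remaining weights `W`, bundled as `θ₀`
    (c : EuclideanSpace ℝ (Fin N)) (W : EuclideanSpace ℝ (Fin Pdim))
    (θ₀ : EuclideanSpace ℝ ((Fin N) ⊕ (Fin Pdim)))
    (hθ₀l : ∀ i, θ₀ (Sum.inl i) = c i) (hθ₀r : ∀ p, θ₀ (Sum.inr p) = W p)
    -- previous layers `h_i(x; W)`, differentiable in `W`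
    (h : Fin N → EuclideanSpace ℝ (Fin d) → EuclideanSpace ℝ (Fin Pdim) → ℝ)
    (hh : ∀ i x, Differentiable ℝ (h i x))
    -- differentiable activation
    (φ : ℝ → ℝ) (hφ : Differentiable ℝ φ)
    -- random modulations
    (uα uβ vα vβ : Fin N → Ω → ℝ)
    (huαm : ∀ i, Measurable (uα i)) (huβm : ∀ i, Measurable (uβ i))
    (hvαm : ∀ i, Measurable (vα i)) (hvβm : ∀ i, Measurable (vβ i))
    -- the `u_{α i}` and `u_{β i}` are integrable and centered
    (huαint : ∀ i, Integrable (uα i) P) (huβint : ∀ i, Integrable (uβ i) P)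
    (huα0 : ∀ i, ∫ ω, uα i ω ∂P = 0) (huβ0 : ∀ i, ∫ ω, uβ i ω ∂P = 0)
    -- the family `(u_{α i})`, the family `(u_{β i})` and all other random variables form
    -- three mutually independent blocks
    (hindep : iIndep
      ![⨆ i, MeasurableSpace.comap (uα i) inferInstance,
        ⨆ i, MeasurableSpace.comap (uβ i) inferInstance,
        (⨆ i, MeasurableSpace.comap (vα i) inferInstance) ⊔
        (⨆ i, MeasurableSpace.comap (vβ i) inferInstance)] P)
    -- the model outputs as functions of the shared parameters `θ`
    (fα fβ : EuclideanSpace ℝ (Fin d) → Ω → EuclideanSpace ℝ ((Fin N) ⊕ (Fin Pdim)) → ℝ)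
    (hfα : ∀ x ω θ, fα x ω θ
      = (1 / Real.sqrt N) * ∑ i, θ (Sum.inl i) * uα i ω
          * φ (vα i ω * h i x (WithLp.toLp 2 (fun p => θ (Sum.inr p)))))
    (hfβ : ∀ x ω θ, fβ x ω θ
      = (1 / Real.sqrt N) * ∑ i, θ (Sum.inl i) * uβ i ω
          * φ (vβ i ω * h i x (WithLp.toLp 2 (fun p => θ (Sum.inr p)))))
    -- all appearing products are integrable
    (hNTKint : ∀ x x',
      Integrable (fun ω => ⟪gradient (fα x ω) θ₀, gradient (fβ x' ω) θ₀⟫) P)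
    (hint₁ : ∀ (x x' : EuclideanSpace ℝ (Fin d)) (i i' : Fin N),
      Integrable (fun ω =>
        uα i ω * uβ i' ω * φ (vα i ω * h i x W) * φ (vβ i' ω * h i' x' W)) P)
    (hint₂ : ∀ (x x' : EuclideanSpace ℝ (Fin d)) (i i' : Fin N),
      Integrable (fun ω =>
        uα i ω * uβ i' ω * vα i ω * vβ i' ω
          * deriv φ (vα i ω * h i x W) * deriv φ (vβ i' ω * h i' x' W)) P) :
    ∀ x x' : EuclideanSpace ℝ (Fin d),
      ∫ ω, ⟪gradient (fα x ω) θ₀, gradient (fβ x' ω) θ₀⟫ ∂P = 0 :=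
  expected_common_NTK_vanishes_between_models_general P N Pdim d W θ₀ hθ₀r h hh φ hφ uα uβ vα vβ
    huαm huβm hvαm hvβm huα0 hindep fα fβ hfα hfβ hint₁ hint₂
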